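/- Let m, n be positive integers, r = min(m,n), Ω ⊆ {1,…,m}×{1,…,n}, X a real m×n matrix, σ > 0 and λ > 0. Suppose (d*, α*, β*) with d*_k ≥ 0, ‖α*_k‖₂ ≤ 1, ‖β*_k‖₂ ≤ 1 for all k ∈ {1,…,r} minimizes G(d,α,β) := (1/(2σ²))·Σ_{(i,j)∈Ω}(X_{ij} − (Σ_{k=1}^r d_k α_k β_kᵀ)_{ij})² + λ·Σ_{k=1}^r d_k over all such feasible tuples. Then the matrix Z* := Σ_{k=1}^r d*_k α*_k (β*_k)ᵀ minimizes F(Z) := (1/(2σ²))·Σ_{(i,j)∈Ω}(X_{ij} − Z_{ij})² + λ‖Z‖_* over all real m×n matrices Z. (Theorem 1, transfer of optimal solutions from P2 to P1.) -/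

import Mathlib

open scoped BigOperators

/-- The nuclear norm of a real matrix: the sum of the square roots of the
eigenvalues of `Zᵀ * Z` (i.e. the sum of the singular values of `Z`). -/
noncomputable def nuclearNorm {m n : ℕ} (Z : Matrix (Fin m) (Fin n) ℝ) : ℝ :=
  ∑ j, Real.sqrt ((show (Matrix.transpose Z * Z).IsHermitian by
    simpa using Matrix.isHermitian_conjTranspose_mul_self Z).eigenvalues j)

/-- The Euclidean (ℓ²) norm of a vector in `ℝ^m`. -/
noncomputable def l2norm {m : ℕ} (x : Fin m → ℝ) : ℝ := Real.sqrt (∑ i, x i ^ 2)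

/-- `∑ k, d k • (α k) (β k)ᵀ`, a sum of scaled rank-one matrices. -/
noncomputable def rankOneSum {m n r : ℕ} (d : Fin r → ℝ) (α : Fin r → Fin m → ℝ)
    (β : Fin r → Fin n → ℝ) : Matrix (Fin m) (Fin n) ℝ :=
  ∑ k, d k • Matrix.vecMulVec (α k) (β k)

/-!
Expand the matrix `M = ∑ₖ dₖ αₖ βₖᵀ` of a feasible triple against a singular value decomposition
`M = ∑ⱼ sⱼ uⱼ vⱼᵀ`: then `‖M‖_* = ∑ⱼ uⱼᵀ M vⱼ = ∑ₖ dₖ ∑ⱼ (uⱼ · αₖ)(vⱼ · βₖ) ≤ ∑ₖ dₖ` by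
Cauchy–Schwarz and Bessel's inequality, so `F M ≤ G d α β`. Conversely, the singular value
decomposition of any `Z` has at most `min m n` nonzero terms, so it is itself a feasible triple,
with `G = F Z`. Hence `F Z* ≤ G d* α* β* ≤ F Z`.
-/

open Matrix Finset

theorem l2norm_le_one_iff {m : ℕ} (x : Fin m → ℝ) : l2norm x ≤ 1 ↔ x ⬝ᵥ x ≤ 1 := by
  simp [l2norm, dotProduct, sq]

section Bessel

variable {ι κ κ' : Type*} [Fintype ι] [Fintype κ] [Fintype κ']

theorem sum_sq_dotProduct_le {u : ι → κ → ℝ} (horth : Pairwise fun i j => u i ⬝ᵥ u j = 0)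
    (hnorm : ∀ i, u i ⬝ᵥ u i ≤ 1) (x : κ → ℝ) : ∑ i, (u i ⬝ᵥ x) ^ 2 ≤ x ⬝ᵥ x := by
  set c := fun i => u i ⬝ᵥ x
  set y := ∑ i, c i • u i
  have hyx : y ⬝ᵥ x = ∑ i, c i ^ 2 := by
    simp [y, sum_dotProduct, smul_dotProduct, sq, c]
  have hyy : y ⬝ᵥ y ≤ ∑ i, c i ^ 2 :=
    calc y ⬝ᵥ y = ∑ i, c i ^ 2 * (u i ⬝ᵥ u i) := by
          simp only [y, sum_dotProduct, dotProduct_sum, smul_dotProduct, dotProduct_smul]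
          refine sum_congr rfl fun i _ => ?_
          rw [sum_eq_single i (fun j _ hji => by rw [horth hji, smul_zero])
            (by simp)]
          simp only [smul_eq_mul]; ring
      _ ≤ ∑ i, c i ^ 2 := sum_le_sum fun i _ => mul_le_of_le_one_right (sq_nonneg _) (hnorm i)
  have hnonneg : 0 ≤ (x - y) ⬝ᵥ (x - y) := Fintype.sum_nonneg fun _ => mul_self_nonneg _
  rw [sub_dotProduct, dotProduct_sub, dotProduct_sub, dotProduct_comm x y, hyx] at hnonneg
  linarith

theorem sum_dotProduct_mul_dotProduct_le_one {u : ι → κ → ℝ} {v : ι → κ' → ℝ}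
    (hu : ∀ x, ∑ i, (u i ⬝ᵥ x) ^ 2 ≤ x ⬝ᵥ x) (hv : ∀ y, ∑ i, (v i ⬝ᵥ y) ^ 2 ≤ y ⬝ᵥ y)
    {x : κ → ℝ} {y : κ' → ℝ} (hx : x ⬝ᵥ x ≤ 1) (hy : y ⬝ᵥ y ≤ 1) :
    ∑ i, (u i ⬝ᵥ x) * (v i ⬝ᵥ y) ≤ 1 := by
  have hcs := sum_mul_sq_le_sq_mul_sq univ (fun i => u i ⬝ᵥ x) (fun i => v i ⬝ᵥ y)
  have hux := (hu x).trans hx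
  have hvy := (hv y).trans hy
  have : (∑ i, (u i ⬝ᵥ x) ^ 2) * ∑ i, (v i ⬝ᵥ y) ^ 2 ≤ 1 :=
    mul_le_one₀ hux (sum_nonneg fun _ _ => sq_nonneg _) hvy
  nlinarith

end Bessel

namespace Matrix

variable {m n : ℕ} (Z : Matrix (Fin m) (Fin n) ℝ)

theorem isHermitian_transpose_mul_self : (Zᵀ * Z).IsHermitian := by
  simpa using isHermitian_conjTranspose_mul_self Z

noncomputable def rightSingularVector (j : Fin n) : Fin n → ℝ :=
  Z.isHermitian_transpose_mul_self.eigenvectorBasis j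

noncomputable def singularValue (j : Fin n) : ℝ :=
  √(Z.isHermitian_transpose_mul_self.eigenvalues j)

-- Since `0⁻¹ = 0`, this is the zero vector when the singular value vanishes.
noncomputable def leftSingularVector (j : Fin n) : Fin m → ℝ :=
  (Z.singularValue j)⁻¹ • (Z *ᵥ Z.rightSingularVector j)

theorem nuclearNorm_eq_sum_singularValue : nuclearNorm Z = ∑ j, Z.singularValue j := rfl

theorem singularValue_nonneg (j : Fin n) : 0 ≤ Z.singularValue j := Real.sqrt_nonneg _

theorem sq_singularValue (j : Fin n) :
    Z.singularValue j ^ 2 = Z.isHermitian_transpose_mul_self.eigenvalues j := by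
  refine Real.sq_sqrt ?_
  simpa using (posSemidef_conjTranspose_mul_self Z).eigenvalues_nonneg j

theorem rightSingularVector_dotProduct (i j : Fin n) :
    Z.rightSingularVector i ⬝ᵥ Z.rightSingularVector j = if i = j then 1 else 0 := by
  have h := congrFun₂ (mem_unitaryGroup_iff'.mp
    (Z.isHermitian_transpose_mul_self.eigenvectorUnitary).2) i j
  simpa [mul_apply, one_apply, dotProduct, rightSingularVector] using h

theorem sum_vecMulVec_rightSingularVector :
    ∑ j, vecMulVec (Z.rightSingularVector j) (Z.rightSingularVector j) = 1 := by
  ext a b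
  have h := congrFun₂ (mem_unitaryGroup_iff.mp
    (Z.isHermitian_transpose_mul_self.eigenvectorUnitary).2) a b
  simpa [mul_apply, sum_apply, vecMulVec_apply, rightSingularVector] using h

theorem transpose_mul_self_mulVec_rightSingularVector (j : Fin n) :
    (Zᵀ * Z) *ᵥ Z.rightSingularVector j =
      Z.isHermitian_transpose_mul_self.eigenvalues j • Z.rightSingularVector j :=
  Z.isHermitian_transpose_mul_self.mulVec_eigenvectorBasis j

theorem mulVec_rightSingularVector_dotProduct (i j : Fin n) :
    (Z *ᵥ Z.rightSingularVector i) ⬝ᵥ (Z *ᵥ Z.rightSingularVector j) =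
      if i = j then Z.singularValue j ^ 2 else 0 := by
  rw [← vecMul_transpose, ← dotProduct_mulVec, mulVec_mulVec,
    transpose_mul_self_mulVec_rightSingularVector, dotProduct_smul,
    rightSingularVector_dotProduct, sq_singularValue]
  split_ifs <;> simp

theorem mulVec_rightSingularVector (j : Fin n) :
    Z *ᵥ Z.rightSingularVector j = Z.singularValue j • Z.leftSingularVector j := by
  rcases eq_or_ne (Z.singularValue j) 0 with h | h
  · have hsq : (Z *ᵥ Z.rightSingularVector j) ⬝ᵥ (Z *ᵥ Z.rightSingularVector j) = 0 := by
      simpa [h] using Z.mulVec_rightSingularVector_dotProduct j j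
    simp [dotProduct_self_eq_zero.mp hsq, h]
  · rw [leftSingularVector, smul_inv_smul₀ h]

theorem leftSingularVector_dotProduct (i j : Fin n) :
    Z.leftSingularVector i ⬝ᵥ Z.leftSingularVector j =
      if i = j ∧ Z.singularValue j ≠ 0 then 1 else 0 := by
  simp only [leftSingularVector, smul_dotProduct, dotProduct_smul,
    mulVec_rightSingularVector_dotProduct, smul_eq_mul]
  by_cases hij : i = j
  · subst hij
    by_cases h : Z.singularValue i = 0 <;> simp [h]; field_simp
  · simp [hij]

theorem sum_sq_dotProduct_rightSingularVector_le (x : Fin n → ℝ) :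
    ∑ j, (Z.rightSingularVector j ⬝ᵥ x) ^ 2 ≤ x ⬝ᵥ x :=
  sum_sq_dotProduct_le (fun i j hij => by simp [rightSingularVector_dotProduct, hij])
    (fun j => by simp [rightSingularVector_dotProduct]) x

theorem sum_sq_dotProduct_leftSingularVector_le (x : Fin m → ℝ) :
    ∑ j, (Z.leftSingularVector j ⬝ᵥ x) ^ 2 ≤ x ⬝ᵥ x :=
  sum_sq_dotProduct_le (fun i j hij => by simp [leftSingularVector_dotProduct, hij])
    (fun j => by rw [leftSingularVector_dotProduct]; split_ifs <;> norm_num) x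

theorem singularValue_eq_dotProduct (j : Fin n) :
    Z.singularValue j = Z.leftSingularVector j ⬝ᵥ (Z *ᵥ Z.rightSingularVector j) := by
  rw [leftSingularVector, smul_dotProduct, mulVec_rightSingularVector_dotProduct, if_pos rfl,
    smul_eq_mul]
  rcases eq_or_ne (Z.singularValue j) 0 with h | h
  · simp [h]
  · field_simp

theorem sum_singularValue_smul_vecMulVec :
    ∑ j, Z.singularValue j • vecMulVec (Z.leftSingularVector j) (Z.rightSingularVector j) = Z :=
  calc _ = ∑ j, Z * vecMulVec (Z.rightSingularVector j) (Z.rightSingularVector j) := by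
        simp only [mul_vecMulVec, mulVec_rightSingularVector, smul_vecMulVec]
    _ = Z := by rw [← Matrix.mul_sum, sum_vecMulVec_rightSingularVector, Matrix.mul_one]

theorem card_singularValue_ne_zero_le : #{j | Z.singularValue j ≠ 0} ≤ min m n := by
  have hrank : #{j | Z.singularValue j ≠ 0} = Z.rank := by
    rw [← rank_transpose_mul_self, Z.isHermitian_transpose_mul_self.rank_eq_card_non_zero_eigs,
      Fintype.card_subtype]
    congr 1
    ext j
    simp only [mem_filter_univ, ← sq_singularValue, ne_eq, pow_eq_zero_iff two_ne_zero]
  exact hrank ▸ le_min ((rank_le_card_height Z).trans_eq (Fintype.card_fin m))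
    ((rank_le_card_width Z).trans_eq (Fintype.card_fin n))

end Matrix

section RankOneSum

variable {m n r : ℕ}

theorem dotProduct_rankOneSum_mulVec (d : Fin r → ℝ) (α : Fin r → Fin m → ℝ)
    (β : Fin r → Fin n → ℝ) (x : Fin m → ℝ) (y : Fin n → ℝ) :
    x ⬝ᵥ (rankOneSum d α β *ᵥ y) = ∑ k, d k * ((x ⬝ᵥ α k) * (y ⬝ᵥ β k)) := by
  simp [rankOneSum, sum_mulVec, dotProduct_sum, smul_mulVec, vecMulVec_mulVec, dotProduct_comm y,
    mul_comm]

theorem nuclearNorm_rankOneSum_le {d : Fin r → ℝ} {α : Fin r → Fin m → ℝ}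
    {β : Fin r → Fin n → ℝ} (hd : ∀ k, 0 ≤ d k) (hα : ∀ k, l2norm (α k) ≤ 1)
    (hβ : ∀ k, l2norm (β k) ≤ 1) :
    nuclearNorm (rankOneSum d α β) ≤ ∑ k, d k := by
  set M := rankOneSum d α β
  calc nuclearNorm M
      = ∑ j, M.leftSingularVector j ⬝ᵥ (M *ᵥ M.rightSingularVector j) := by
        simp only [nuclearNorm_eq_sum_singularValue, singularValue_eq_dotProduct]
    _ = ∑ k, d k * ∑ j, (M.leftSingularVector j ⬝ᵥ α k) * (M.rightSingularVector j ⬝ᵥ β k) := by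
        simp only [M, dotProduct_rankOneSum_mulVec, mul_sum]
        exact sum_comm
    _ ≤ ∑ k, d k := sum_le_sum fun k _ => mul_le_of_le_one_right (hd k) <|
        sum_dotProduct_mul_dotProduct_le_one M.sum_sq_dotProduct_leftSingularVector_le
          M.sum_sq_dotProduct_rightSingularVector_le ((l2norm_le_one_iff _).mp (hα k))
          ((l2norm_le_one_iff _).mp (hβ k))

theorem exists_rankOneSum_eq (hr : r = min m n) (Z : Matrix (Fin m) (Fin n) ℝ) :
    ∃ (d : Fin r → ℝ) (α : Fin r → Fin m → ℝ) (β : Fin r → Fin n → ℝ),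
      (∀ k, 0 ≤ d k) ∧ (∀ k, l2norm (α k) ≤ 1) ∧ (∀ k, l2norm (β k) ≤ 1) ∧
      rankOneSum d α β = Z ∧ ∑ k, d k = nuclearNorm Z := by
  obtain ⟨T, hST, hT⟩ := exists_superset_card_eq
    (Z.card_singularValue_ne_zero_le.trans_eq hr.symm) (by simp [hr])
  obtain ⟨e, he⟩ := Function.Embedding.exists_of_card_eq_finset (α := Fin r) (s := T)
    (by simp [hT])
  have hvanish : ∀ j ∉ Set.range e, Z.singularValue j = 0 := fun j hj => by
    by_contra h
    have hj' : j ∈ univ.map e := he ▸ hST (by simpa using h)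
    exact hj (by simpa using hj')
  refine ⟨fun k => Z.singularValue (e k), fun k => Z.leftSingularVector (e k),
    fun k => Z.rightSingularVector (e k), fun k => Z.singularValue_nonneg _,
    fun k => (l2norm_le_one_iff _).mpr ?_, fun k => (l2norm_le_one_iff _).mpr ?_, ?_, ?_⟩
  · rw [leftSingularVector_dotProduct]; split_ifs <;> norm_num
  · simp [rightSingularVector_dotProduct]
  · refine (Fintype.sum_of_injective e e.injective _ _ (fun j hj => ?_) fun k => rfl).trans
      Z.sum_singularValue_smul_vecMulVec
    simp [hvanish j hj]
  · exact Fintype.sum_of_injective e e.injective _ _ hvanish fun k => rfl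

end RankOneSum

theorem optimal_solution_transfer_P2_to_P1_general
    (m n : ℕ) (r : ℕ) (hr : r = min m n)
    (Ω : Finset (Fin m × Fin n)) (X : Matrix (Fin m) (Fin n) ℝ)
    (σ lam : ℝ) (hlam : 0 < lam)
    (F : Matrix (Fin m) (Fin n) ℝ → ℝ)
    (hF : ∀ Z, F Z = (1 / (2 * σ ^ 2)) * ∑ p ∈ Ω, (X p.1 p.2 - Z p.1 p.2) ^ 2
        + lam * nuclearNorm Z)
    (G : (Fin r → ℝ) → (Fin r → Fin m → ℝ) → (Fin r → Fin n → ℝ) → ℝ)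
    (hG : ∀ d α β, G d α β =
        (1 / (2 * σ ^ 2)) * ∑ p ∈ Ω, (X p.1 p.2 - rankOneSum d α β p.1 p.2) ^ 2
        + lam * ∑ k, d k)
    (dstar : Fin r → ℝ) (αstar : Fin r → Fin m → ℝ) (βstar : Fin r → Fin n → ℝ)
    (hd : ∀ k, 0 ≤ dstar k) (hα : ∀ k, l2norm (αstar k) ≤ 1)
    (hβ : ∀ k, l2norm (βstar k) ≤ 1)
    (hmin : ∀ (d : Fin r → ℝ) (α : Fin r → Fin m → ℝ) (β : Fin r → Fin n → ℝ),
        (∀ k, 0 ≤ d k) → (∀ k, l2norm (α k) ≤ 1) → (∀ k, l2norm (β k) ≤ 1) →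
        G dstar αstar βstar ≤ G d α β) :
    ∀ Z : Matrix (Fin m) (Fin n) ℝ, F (rankOneSum dstar αstar βstar) ≤ F Z := by
  intro Z
  obtain ⟨d, α, β, hd', hα', hβ', rfl, hsum⟩ := exists_rankOneSum_eq hr Z
  calc F (rankOneSum dstar αstar βstar) ≤ G dstar αstar βstar := by
        rw [hF, hG]
        gcongr
        exact nuclearNorm_rankOneSum_le hd hα hβ
    _ ≤ G d α β := hmin d α β hd' hα' hβ'
    _ = F (rankOneSum d α β) := by rw [hF, hG, hsum]

theorem optimal_solution_transfer_P2_to_P1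
    (m n : ℕ) (hm : 0 < m) (hn : 0 < n) (r : ℕ) (hr : r = min m n)
    (Ω : Finset (Fin m × Fin n)) (X : Matrix (Fin m) (Fin n) ℝ)
    (σ lam : ℝ) (hσ : 0 < σ) (hlam : 0 < lam)
    (F : Matrix (Fin m) (Fin n) ℝ → ℝ)
    (hF : ∀ Z, F Z = (1 / (2 * σ ^ 2)) * ∑ p ∈ Ω, (X p.1 p.2 - Z p.1 p.2) ^ 2
        + lam * nuclearNorm Z)
    (G : (Fin r → ℝ) → (Fin r → Fin m → ℝ) → (Fin r → Fin n → ℝ) → ℝ)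
    (hG : ∀ d α β, G d α β =
        (1 / (2 * σ ^ 2)) * ∑ p ∈ Ω, (X p.1 p.2 - rankOneSum d α β p.1 p.2) ^ 2
        + lam * ∑ k, d k)
    (dstar : Fin r → ℝ) (αstar : Fin r → Fin m → ℝ) (βstar : Fin r → Fin n → ℝ)
    (hd : ∀ k, 0 ≤ dstar k) (hα : ∀ k, l2norm (αstar k) ≤ 1)
    (hβ : ∀ k, l2norm (βstar k) ≤ 1)
    (hmin : ∀ (d : Fin r → ℝ) (α : Fin r → Fin m → ℝ) (β : Fin r → Fin n → ℝ),
        (∀ k, 0 ≤ d k) → (∀ k, l2norm (α k) ≤ 1) → (∀ k, l2norm (β k) ≤ 1) →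
        G dstar αstar βstar ≤ G d α β) :
    ∀ Z : Matrix (Fin m) (Fin n) ℝ, F (rankOneSum dstar αstar βstar) ≤ F Z :=
  optimal_solution_transfer_P2_to_P1_general m n r hr Ω X σ lam hlam F hF G hG dstar αstar βstar hd
    hα hβ hmin
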